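/- arXiv:2511.17291 — 2 statements merged into one kernel-verified Lean document; each statement's English description precedes it below -/
import Mathlib

section
/- Let (a_{1,d})_{d≥3}, (a_{2,d})_{d≥3}, (b_d)_{d≥3} be real sequences, and for each d ≥ 3 let J_d be the (d−1)×(d−1) real matrix with (J_d)_{1,1} = a_{1,d}, (J_d)_{j,j} = a_{2,d} for 2 ≤ j ≤ d−1, (J_d)_{j,1} = b_d for 2 ≤ j ≤ d−1, and all other entries zero. If the largest eigenvalue of J_d + J_dᵀ is ≤ 0, then √(d−2) · |b_d| ≤ |a_{1,d}| + |a_{2,d}|. In particular, if limsup_{d→∞} λ_max(J_d + J_dᵀ) ≤ −c for some c > 0 and the sequences (a_{1,d}), (a_{2,d}) are bounded, then b_d = O(1/√d). -/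
open Filter

noncomputable section

/-- Largest eigenvalue of a symmetric real matrix, expressed through the Rayleigh
quotient: `λ_max(M) = sup_{‖x‖₂ = 1} xᵀ M x`. -/
def lamMax {m : ℕ} (M : Matrix (Fin m) (Fin m) ℝ) : ℝ :=
  sSup {t : ℝ | ∃ x : Fin m → ℝ, (∑ i, (x i) ^ 2) = 1 ∧ t = ∑ i, x i * M.mulVec x i}

lemma lamMax_bddAbove {m : ℕ} (M : Matrix (Fin m) (Fin m) ℝ) :
    BddAbove {t : ℝ | ∃ x : Fin m → ℝ, (∑ i, (x i) ^ 2) = 1 ∧ t = ∑ i, x i * M.mulVec x i} := by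
  refine ⟨∑ i, ∑ j, |M i j|, ?_⟩
  rintro t ⟨x, hx, rfl⟩
  have hxb : ∀ i, |x i| ≤ 1 := by
    intro i
    have h1 : x i ^ 2 ≤ 1 := by
      rw [← hx]
      exact Finset.single_le_sum (f := fun i => x i ^ 2) (fun j _ => sq_nonneg _)
        (Finset.mem_univ i)
    exact (sq_le_one_iff_abs_le_one _).mp h1
  calc ∑ i, x i * M.mulVec x i = ∑ i, ∑ j, x i * (M i j * x j) := by
        simp [Matrix.mulVec, dotProduct, Finset.mul_sum]
    _ ≤ ∑ i, ∑ j, |M i j| := by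
        refine Finset.sum_le_sum fun i _ => Finset.sum_le_sum fun j _ => ?_
        calc x i * (M i j * x j) ≤ |x i * (M i j * x j)| := le_abs_self _
          _ = |x i| * |M i j| * |x j| := by rw [abs_mul, abs_mul]; ring
          _ ≤ 1 * |M i j| * 1 := by
              gcongr
              · exact hxb i
              · exact hxb j
          _ = |M i j| := by ring

lemma core (m : ℕ) (hm : 2 ≤ m) (a1 a2 b : ℝ) (M : Matrix (Fin m) (Fin m) ℝ)
    (hM : ∀ i j : Fin m, M i j =
      if i = j then (if (i : ℕ) = 0 then 2 * a1 else 2 * a2)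
      else (if (j : ℕ) = 0 then b else if (i : ℕ) = 0 then b else 0))
    (h0 : lamMax M ≤ 0) :
    Real.sqrt ((m : ℝ) - 1) * |b| ≤ |a1| + |a2| := by
  have hm0 : 0 < m := by omega
  set i0 : Fin m := ⟨0, hm0⟩ with hi0
  set kR : ℝ := (m : ℝ) - 1 with hkRdef
  have hmR : (2 : ℝ) ≤ (m : ℝ) := by exact_mod_cast hm
  have hkR : 0 < kR := by simp only [hkRdef]; linarith
  set r : ℝ := Real.sqrt kR with hrdef
  have hr : 0 < r := Real.sqrt_pos.mpr hkR
  have hr2 : r ^ 2 = kR := Real.sq_sqrt hkR.le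
  set u : ℝ := Real.sqrt 2⁻¹ with hudef
  have hu2 : u ^ 2 = 2⁻¹ := Real.sq_sqrt (by norm_num)
  set σ : ℝ := if 0 ≤ b then 1 else -1 with hσdef
  have hσ2 : σ * σ = 1 := by by_cases h : 0 ≤ b <;> simp [hσdef, h]
  have hσb : σ * b = |b| := by
    by_cases h : 0 ≤ b
    · simp [hσdef, h, abs_of_nonneg h]
    · simp [hσdef, h, abs_of_neg (lt_of_not_ge h)]
  set s : ℝ := σ * u / r with hsdef
  set x : Fin m → ℝ := fun i => if (i : ℕ) = 0 then u else s with hxdef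
  -- splitting lemma
  have hfilter : (Finset.univ.filter (fun i : Fin m => (i : ℕ) = 0)) = {i0} := by
    ext i
    simp [Fin.ext_iff, hi0]
  have hcard2 : (Finset.univ.filter (fun i : Fin m => ¬ (i : ℕ) = 0)).card = m - 1 := by
    have h : (Finset.filter (fun i : Fin m => (i : ℕ) = 0) Finset.univ).card
        + (Finset.filter (fun i : Fin m => ¬ (i : ℕ) = 0) Finset.univ).card
        = (Finset.univ : Finset (Fin m)).card :=
      Finset.card_filter_add_card_filter_not _
    rw [hfilter] at h
    simp at h
    omega
  have hcast : ((m - 1 : ℕ) : ℝ) = kR := by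
    rw [Nat.cast_sub (by omega)]; simp [hkRdef]
  have hsplit : ∀ f g : ℝ, ∑ i : Fin m, (if (i : ℕ) = 0 then f else g) = f + kR * g := by
    intro f g
    rw [Finset.sum_ite, Finset.sum_const, Finset.sum_const, hfilter, hcard2]
    simp [nsmul_eq_mul, hcast]
  -- rows
  have hmv : ∀ i : Fin m, M.mulVec x i = ∑ j, M i j * x j := by
    intro i; simp [Matrix.mulVec, dotProduct]
  have hrow0 : M.mulVec x i0 = 2 * a1 * u + kR * (b * s) := by
    rw [hmv]
    have hpt : ∀ j : Fin m, M i0 j * x j = (if (j : ℕ) = 0 then 2 * a1 * u else b * s) := by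
      intro j
      by_cases hj : (j : ℕ) = 0
      · have hji : i0 = j := Fin.ext (by simp [hi0, hj])
        rw [hM]
        simp [hji, hj, hxdef]
      · have hji : ¬ i0 = j := by
          intro h; exact hj (by rw [← h])
        rw [hM]
        simp [hji, hj, hxdef, hi0]
        exact fun h => absurd h hji
    rw [Finset.sum_congr rfl (fun j _ => hpt j), hsplit]
  have hrowi : ∀ i : Fin m, (i : ℕ) ≠ 0 → M.mulVec x i = b * u + 2 * a2 * s := by
    intro i hi
    rw [hmv]
    have hii0 : ¬ i = i0 := by
      intro h; exact hi (by rw [h])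
    have hpt : ∀ j : Fin m, M i j * x j =
        (if j = i0 then b * u else 0) + (if j = i then 2 * a2 * s else 0) := by
      intro j
      by_cases h1 : j = i0
      · subst h1
        have hii0' : ¬ i0 = i := fun h => hii0 h.symm
        rw [hM]
        simp [hii0, hi, hxdef, hii0']
        simp [show (i0 : ℕ) = 0 from rfl]
      · by_cases h2 : j = i
        · subst h2
          rw [hM]
          simp [hi, hxdef, h1]
        · rw [hM]
          have hj0 : ¬ (j : ℕ) = 0 := by
            intro h; exact h1 (Fin.ext (by simp [hi0, h]))
          have h2' : ¬ i = j := fun h => h2 h.symm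
          simp [h1, h2, h2', hj0, hi, hxdef]
    rw [Finset.sum_congr rfl (fun j _ => hpt j), Finset.sum_add_distrib,
      Finset.sum_ite_eq' Finset.univ i0 (fun _ => b * u),
      Finset.sum_ite_eq' Finset.univ i (fun _ => 2 * a2 * s)]
    simp
  -- norm
  have hs2 : kR * s ^ 2 = 2⁻¹ := by
    have hse : s ^ 2 = σ * σ * u ^ 2 / r ^ 2 := by
      rw [hsdef, div_pow]; ring
    rw [hse, hσ2, hu2, hr2]
    field_simp
  have hnorm : (∑ i, (x i) ^ 2) = 1 := by
    have hpt : ∀ i : Fin m, (x i) ^ 2 = if (i : ℕ) = 0 then u ^ 2 else s ^ 2 := by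
      intro i; simp only [hxdef]; split_ifs <;> rfl
    rw [Finset.sum_congr rfl (fun i _ => hpt i), hsplit, hu2]
    linarith
  -- quadratic form value
  have hsu : kR * (s * u) = σ * r * 2⁻¹ := by
    have h5 : kR * (s * u) = σ * u ^ 2 * r ^ 2 / r := by
      rw [← hr2, hsdef]
      field_simp
    rw [h5, hu2, hr2, ← hr2]
    field_simp
  have hF : (∑ i, x i * M.mulVec x i) = a1 + a2 + |b| * r := by
    have hpt : ∀ i : Fin m, x i * M.mulVec x i =
        if (i : ℕ) = 0 then u * (2 * a1 * u + kR * (b * s)) else s * (b * u + 2 * a2 * s) := by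
      intro i
      by_cases hi : (i : ℕ) = 0
      · have : i = i0 := Fin.ext (by simp [hi0, hi])
        rw [this, hrow0]
        simp [hxdef, hi0, hi]
      · rw [hrowi i hi]
        simp [hxdef, hi]
    rw [Finset.sum_congr rfl (fun i _ => hpt i), hsplit]
    have e1 : u * (2 * a1 * u + kR * (b * s)) = 2 * a1 * u ^ 2 + b * (kR * (s * u)) := by ring
    have e2 : kR * (s * (b * u + 2 * a2 * s)) = b * (kR * (s * u)) + 2 * a2 * (kR * s ^ 2) := by
      ring
    rw [e1, e2, hsu, hu2, hs2]
    have : b * (σ * r * 2⁻¹) = |b| * r * 2⁻¹ := by rw [← hσb]; ring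
    rw [this]
    ring
  have hmem : a1 + a2 + |b| * r ∈
      {t : ℝ | ∃ x : Fin m → ℝ, (∑ i, (x i) ^ 2) = 1 ∧ t = ∑ i, x i * M.mulVec x i} :=
    ⟨x, hnorm, hF.symm⟩
  have hle : a1 + a2 + |b| * r ≤ lamMax M := le_csSup (lamMax_bddAbove M) hmem
  have h1 := neg_abs_le a1
  have h2 := neg_abs_le a2
  have : r * |b| ≤ |a1| + |a2| := by linarith
  simpa [hrdef, hkRdef] using this

lemma cvine_part1 (a1 a2 b : ℕ → ℝ)
    (J : (d : ℕ) → Matrix (Fin (d - 1)) (Fin (d - 1)) ℝ)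
    (hJ : ∀ d, 3 ≤ d → ∀ i j : Fin (d - 1), J d i j =
      if i = j then (if (i : ℕ) = 0 then a1 d else a2 d)
      else (if (j : ℕ) = 0 then b d else 0)) :
    ∀ d, 3 ≤ d → lamMax (J d + (J d).transpose) ≤ 0 →
      Real.sqrt ((d : ℝ) - 2) * |b d| ≤ |a1 d| + |a2 d| := by
  intro d hd h0
  have hm : 2 ≤ d - 1 := by omega
  have hM : ∀ i j : Fin (d - 1), (J d + (J d).transpose) i j =
      if i = j then (if (i : ℕ) = 0 then 2 * a1 d else 2 * a2 d)
      else (if (j : ℕ) = 0 then b d else if (i : ℕ) = 0 then b d else 0) := by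
    intro i j
    simp only [Matrix.add_apply, Matrix.transpose_apply, hJ d hd]
    by_cases hij : i = j
    · subst hij
      simp only [if_pos rfl]
      by_cases hi : (i : ℕ) = 0 <;> simp [hi] <;> ring
    · have hij' : ¬ j = i := fun h => hij h.symm
      simp only [hij, hij', if_false]
      by_cases hj : (j : ℕ) = 0
      · have hi : ¬ (i : ℕ) = 0 := fun h => hij (Fin.ext (by rw [h, hj]))
        simp [hj, hi]
      · by_cases hi : (i : ℕ) = 0 <;> simp [hj, hi]
  have h := core (d - 1) hm (a1 d) (a2 d) (b d) (J d + (J d).transpose) hM h0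
  have hc : (((d - 1 : ℕ) : ℝ)) - 1 = (d : ℝ) - 2 := by
    rw [Nat.cast_sub (by omega : 1 ≤ d)]; ring
  rwa [hc] at h

/-- **Algebraic core of the Gaussian C-vine proposition.**
For `d ≥ 3` let `J_d` be the `(d−1)×(d−1)` matrix with `(J_d)_{1,1} = a_{1,d}`,
`(J_d)_{j,j} = a_{2,d}` for `j ≥ 2`, `(J_d)_{j,1} = b_d` for `j ≥ 2`, zero otherwise.
If the largest eigenvalue of `J_d + J_dᵀ` is `≤ 0` then
`√(d−2)·|b_d| ≤ |a_{1,d}| + |a_{2,d}|`.  In particular, if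
`limsup_d λ_max(J_d + J_dᵀ) ≤ −c` for some `c > 0` and `(a_{1,d})`, `(a_{2,d})` are
bounded, then `b_d = O(1/√d)`. -/
theorem cvine_eigenvalue_necessary_condition
    (a1 a2 b : ℕ → ℝ)
    (J : (d : ℕ) → Matrix (Fin (d - 1)) (Fin (d - 1)) ℝ)
    (hJ : ∀ d, 3 ≤ d → ∀ i j : Fin (d - 1), J d i j =
      if i = j then (if (i : ℕ) = 0 then a1 d else a2 d)
      else (if (j : ℕ) = 0 then b d else 0)) :
    (∀ d, 3 ≤ d → lamMax (J d + (J d).transpose) ≤ 0 →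
      Real.sqrt ((d : ℝ) - 2) * |b d| ≤ |a1 d| + |a2 d|) ∧
    (∀ c : ℝ, 0 < c →
      Filter.limsup (fun d => lamMax (J d + (J d).transpose)) atTop ≤ -c →
      (∃ C1 : ℝ, ∀ d, |a1 d| ≤ C1) → (∃ C2 : ℝ, ∀ d, |a2 d| ≤ C2) →
      ∃ C : ℝ, ∀ d, 3 ≤ d → |b d| ≤ C / Real.sqrt d) := by

  refine ⟨cvine_part1 a1 a2 b J hJ, ?_⟩
  rintro c hc hls ⟨C1, hC1⟩ ⟨C2, hC2⟩
  have hev : ∃ N : ℕ, ∀ d, N ≤ d → lamMax (J d + (J d).transpose) ≤ 0 := by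
    rw [Filter.limsup_eq] at hls
    set S := {a : ℝ | ∀ᶠ n in atTop, lamMax (J n + (J n).transpose) ≤ a} with hS
    by_cases hne : S.Nonempty
    · obtain ⟨a, haS, ha0⟩ := exists_lt_of_csInf_lt hne
        (lt_of_le_of_lt hls (by linarith : -c < 0))
      obtain ⟨N, hN⟩ := Filter.eventually_atTop.mp haS
      exact ⟨N, fun d hd => (hN d hd).trans ha0.le⟩
    · exfalso
      rw [Set.not_nonempty_iff_eq_empty] at hne
      rw [hne, Real.sInf_empty] at hls
      linarith
  obtain ⟨N, hN⟩ := hev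
  have hC1' : 0 ≤ C1 := le_trans (abs_nonneg _) (hC1 0)
  have hC2' : 0 ≤ C2 := le_trans (abs_nonneg _) (hC2 0)
  set C : ℝ := Real.sqrt 3 * (C1 + C2) + ∑ e ∈ Finset.range N, |b e| * Real.sqrt e with hCdef
  have hsum_nonneg : 0 ≤ ∑ e ∈ Finset.range N, |b e| * Real.sqrt e :=
    Finset.sum_nonneg fun e _ => mul_nonneg (abs_nonneg _) (Real.sqrt_nonneg _)
  have hhead_nonneg : 0 ≤ Real.sqrt 3 * (C1 + C2) :=
    mul_nonneg (Real.sqrt_nonneg _) (by linarith)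
  refine ⟨C, fun d hd => ?_⟩
  have hd3 : (3 : ℝ) ≤ (d : ℝ) := by exact_mod_cast hd
  have hdpos : (0 : ℝ) < Real.sqrt d := Real.sqrt_pos.mpr (by linarith)
  rw [le_div_iff₀ hdpos]
  by_cases hdN : N ≤ d
  · have h1 := cvine_part1 a1 a2 b J hJ d hd (hN d hdN)
    have h1' : Real.sqrt ((d : ℝ) - 2) * |b d| ≤ C1 + C2 :=
      h1.trans (add_le_add (hC1 d) (hC2 d))
    have h2 : Real.sqrt (d : ℝ) ≤ Real.sqrt 3 * Real.sqrt ((d : ℝ) - 2) := by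
      rw [← Real.sqrt_mul (by norm_num : (0:ℝ) ≤ 3)]
      apply Real.sqrt_le_sqrt
      linarith
    calc |b d| * Real.sqrt d ≤ |b d| * (Real.sqrt 3 * Real.sqrt ((d : ℝ) - 2)) :=
          mul_le_mul_of_nonneg_left h2 (abs_nonneg _)
      _ = Real.sqrt 3 * (Real.sqrt ((d : ℝ) - 2) * |b d|) := by ring
      _ ≤ Real.sqrt 3 * (C1 + C2) := mul_le_mul_of_nonneg_left h1' (Real.sqrt_nonneg 3)
      _ ≤ C := le_add_of_nonneg_right hsum_nonneg
  · have hmem : d ∈ Finset.range N := Finset.mem_range.mpr (by omega)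
    have h3 : |b d| * Real.sqrt d ≤ ∑ e ∈ Finset.range N, |b e| * Real.sqrt e :=
      Finset.single_le_sum (f := fun e => |b e| * Real.sqrt (e : ℝ))
        (fun e _ => mul_nonneg (abs_nonneg _) (Real.sqrt_nonneg _)) hmem
    calc |b d| * Real.sqrt d ≤ ∑ e ∈ Finset.range N, |b e| * Real.sqrt e := h3
      _ ≤ C := le_add_of_nonneg_left hhead_nonneg


end
end

section
/- Let ρ₁₂, ρ₁ᵢ ∈ (−1,1) and let X₁, X₂, Xᵢ be real random variables with E[X₁²] = E[X₂²] = E[Xᵢ²] = 1, E[X₁X₂] = ρ₁₂, E[X₁Xᵢ] = ρ₁ᵢ, and E[X₂Xᵢ] = ρ₂ᵢ. Define the h-transforms X_{2|1} = (X₂ − ρ₁₂X₁)/√(1−ρ₁₂²) and X_{i|1} = (Xᵢ − ρ₁ᵢX₁)/√(1−ρ₁ᵢ²), and the partial correlation ρ_{2i;1} = (ρ₂ᵢ − ρ₁ᵢρ₁₂)/√((1−ρ₁₂²)(1−ρ₁ᵢ²)); assume |ρ_{2i;1}| < 1. Then E[ ((1+ρ_{2i;1}²)X_{i|1} − 2ρ_{2i;1}X_{2|1})/(1−ρ_{2i;1}²)²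 · (ρ₁₂X₂ − X₁)/(1−ρ₁₂²)^{3/2} ] = −ρ₁₂ρ_{2i;1} / ((1−ρ_{2i;1}²)(1−ρ₁₂²)). -/
open MeasureTheory

noncomputable section

set_option maxHeartbeats 2000000 in
/-- **Cross-tree derivative of the Gaussian C-vine score** (Lemma C.1 of the paper,
second part).  With `X₁, X₂, Xᵢ` having unit second moments and cross moments
`E[X₁X₂] = ρ₁₂`, `E[X₁Xᵢ] = ρ₁ᵢ`, `E[X₂Xᵢ] = ρ₂ᵢ`, the h-transforms
`X_{2|1} = (X₂ − ρ₁₂X₁)/√(1−ρ₁₂²)`, `X_{i|1} = (Xᵢ − ρ₁ᵢX₁)/√(1−ρ₁ᵢ²)` and the partial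
correlation `ρ_{2i;1} = (ρ₂ᵢ − ρ₁ᵢρ₁₂)/√((1−ρ₁₂²)(1−ρ₁ᵢ²))` satisfy
`E[((1+ρ_{2i;1}²)X_{i|1} − 2ρ_{2i;1}X_{2|1})/(1−ρ_{2i;1}²)² · (ρ₁₂X₂ − X₁)/(1−ρ₁₂²)^{3/2}]
  = −ρ₁₂ρ_{2i;1}/((1−ρ_{2i;1}²)(1−ρ₁₂²))`. -/
theorem gaussian_cvine_cross_score_expectation
    {Ω : Type*} [MeasurableSpace Ω] (μ : Measure Ω) [IsProbabilityMeasure μ]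
    (ρ12 ρ1i ρ2i : ℝ)
    (h12 : ρ12 ∈ Set.Ioo (-1 : ℝ) 1) (h1i : ρ1i ∈ Set.Ioo (-1 : ℝ) 1)
    (X1 X2 Xi : Ω → ℝ)
    (hi1 : Integrable (fun ω => X1 ω ^ 2) μ)
    (hi2 : Integrable (fun ω => X2 ω ^ 2) μ)
    (hii : Integrable (fun ω => Xi ω ^ 2) μ)
    (hi12 : Integrable (fun ω => X1 ω * X2 ω) μ)
    (hi1i : Integrable (fun ω => X1 ω * Xi ω) μ)
    (hi2i : Integrable (fun ω => X2 ω * Xi ω) μ)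
    (hm1 : ∫ ω, X1 ω ^ 2 ∂μ = 1)
    (hm2 : ∫ ω, X2 ω ^ 2 ∂μ = 1)
    (hmi : ∫ ω, Xi ω ^ 2 ∂μ = 1)
    (hm12 : ∫ ω, X1 ω * X2 ω ∂μ = ρ12)
    (hm1i : ∫ ω, X1 ω * Xi ω ∂μ = ρ1i)
    (hm2i : ∫ ω, X2 ω * Xi ω ∂μ = ρ2i)
    -- the h-transforms and the partial correlation
    (X21 Xi1 : Ω → ℝ) (ρ2i1 : ℝ)
    (hX21 : ∀ ω, X21 ω = (X2 ω - ρ12 * X1 ω) / Real.sqrt (1 - ρ12 ^ 2))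
    (hXi1 : ∀ ω, Xi1 ω = (Xi ω - ρ1i * X1 ω) / Real.sqrt (1 - ρ1i ^ 2))
    (hρ2i1 : ρ2i1 = (ρ2i - ρ1i * ρ12) / Real.sqrt ((1 - ρ12 ^ 2) * (1 - ρ1i ^ 2)))
    (hρ2i1lt : |ρ2i1| < 1) :
    ∫ ω, ((1 + ρ2i1 ^ 2) * Xi1 ω - 2 * ρ2i1 * X21 ω) / (1 - ρ2i1 ^ 2) ^ 2 *
        ((ρ12 * X2 ω - X1 ω) / (1 - ρ12 ^ 2) ^ ((3 : ℝ) / 2)) ∂μ =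
      -(ρ12 * ρ2i1 / ((1 - ρ2i1 ^ 2) * (1 - ρ12 ^ 2))) := by
  obtain ⟨h12l, h12r⟩ := h12
  obtain ⟨h1il, h1ir⟩ := h1i
  have h12pos : (0 : ℝ) < 1 - ρ12 ^ 2 := by nlinarith
  have h1ipos : (0 : ℝ) < 1 - ρ1i ^ 2 := by nlinarith
  have hρpos : (0 : ℝ) < 1 - ρ2i1 ^ 2 := by
    have := (abs_lt.mp hρ2i1lt)
    nlinarith [this.1, this.2]
  set s12 := Real.sqrt (1 - ρ12 ^ 2) with hs12def
  set s1i := Real.sqrt (1 - ρ1i ^ 2) with hs1idef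
  have hs12pos : 0 < s12 := Real.sqrt_pos.mpr h12pos
  have hs1ipos : 0 < s1i := Real.sqrt_pos.mpr h1ipos
  have hs12sq : s12 ^ 2 = 1 - ρ12 ^ 2 := Real.sq_sqrt h12pos.le
  have hs1isq : s1i ^ 2 = 1 - ρ1i ^ 2 := Real.sq_sqrt h1ipos.le
  have hs12ne : s12 ≠ 0 := hs12pos.ne'
  have hs1ine : s1i ≠ 0 := hs1ipos.ne'
  have hρne : (1 - ρ2i1 ^ 2) ≠ 0 := hρpos.ne'
  -- rpow rewrite
  have hrpow : (1 - ρ12 ^ 2) ^ ((3 : ℝ) / 2) = s12 ^ 3 := by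
    rw [show ((3 : ℝ) / 2) = (1 / 2 : ℝ) * (3 : ℕ) by norm_num,
      Real.rpow_mul h12pos.le, Real.rpow_natCast, ← Real.rpow_natCast _ 3,
      ← Real.rpow_natCast _ 3, hs12def, Real.sqrt_eq_rpow]
  -- partial correlation relation
  have hsprod : Real.sqrt ((1 - ρ12 ^ 2) * (1 - ρ1i ^ 2)) = s12 * s1i := by
    rw [Real.sqrt_mul h12pos.le]
  have hrel : ρ2i = ρ2i1 * (s12 * s1i) + ρ1i * ρ12 := by
    rw [hρ2i1, hsprod]
    field_simp
    ring
  -- coefficients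
  set A : ℝ := (1 + ρ2i1 ^ 2) / ((1 - ρ2i1 ^ 2) ^ 2 * s1i) with hA
  set B : ℝ := 2 * ρ2i1 / ((1 - ρ2i1 ^ 2) ^ 2 * s12) with hB
  set D : ℝ := 1 / s12 ^ 3 with hD
  have key : (fun ω => ((1 + ρ2i1 ^ 2) * Xi1 ω - 2 * ρ2i1 * X21 ω) / (1 - ρ2i1 ^ 2) ^ 2 *
        ((ρ12 * X2 ω - X1 ω) / (1 - ρ12 ^ 2) ^ ((3 : ℝ) / 2)))
      = (fun ω => (A * D * ρ1i - B * D * ρ12) * (X1 ω ^ 2)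
          + (-(B * D * ρ12)) * (X2 ω ^ 2)
          + (-(A * D * ρ1i * ρ12) + B * D * (1 + ρ12 ^ 2)) * (X1 ω * X2 ω)
          + (-(A * D)) * (X1 ω * Xi ω)
          + (A * D * ρ12) * (X2 ω * Xi ω)) := by
    funext ω
    rw [hX21 ω, hXi1 ω, hrpow, hA, hB, hD]
    field_simp
    ring
  rw [key]
  have I1 := hi1.const_mul (A * D * ρ1i - B * D * ρ12)
  have I2 := hi2.const_mul (-(B * D * ρ12))
  have I3 := hi12.const_mul (-(A * D * ρ1i * ρ12) + B * D * (1 + ρ12 ^ 2))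
  have I4 := hi1i.const_mul (-(A * D))
  have I5 := hi2i.const_mul (A * D * ρ12)
  have I12 : Integrable (fun x => (A * D * ρ1i - B * D * ρ12) * (X1 x ^ 2)
      + (-(B * D * ρ12)) * (X2 x ^ 2)) μ := I1.add I2
  have I123 : Integrable (fun x => (A * D * ρ1i - B * D * ρ12) * (X1 x ^ 2)
      + (-(B * D * ρ12)) * (X2 x ^ 2)
      + (-(A * D * ρ1i * ρ12) + B * D * (1 + ρ12 ^ 2)) * (X1 x * X2 x)) μ := I12.add I3
  have I1234 : Integrable (fun x => (A * D * ρ1i - B * D * ρ12) * (X1 x ^ 2)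
      + (-(B * D * ρ12)) * (X2 x ^ 2)
      + (-(A * D * ρ1i * ρ12) + B * D * (1 + ρ12 ^ 2)) * (X1 x * X2 x)
      + (-(A * D)) * (X1 x * Xi x)) μ := I123.add I4
  rw [integral_add I1234 I5, integral_add I123 I4, integral_add I12 I3,
      integral_add I1 I2,
      integral_const_mul, integral_const_mul, integral_const_mul, integral_const_mul,
      integral_const_mul, hm1, hm2, hm12, hm1i, hm2i, hrel]
  have hne12 : (1 - ρ12 ^ 2) ≠ 0 := h12pos.ne'
  have e1 : A * D * (ρ2i1 * ρ12 * (s12 * s1i))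
      = (1 + ρ2i1 ^ 2) * ρ2i1 * ρ12 / ((1 - ρ2i1 ^ 2) ^ 2 * (1 - ρ12 ^ 2)) := by
    rw [hA, hD, ← hs12sq]
    field_simp
  have e2 : B * D * (-(ρ12 * (1 - ρ12 ^ 2)))
      = -(2 * ρ2i1 * ρ12 / ((1 - ρ2i1 ^ 2) ^ 2 * (1 - ρ12 ^ 2))) := by
    rw [hB, hD, ← hs12sq]
    field_simp
  have step : A * D * (ρ2i1 * ρ12 * (s12 * s1i)) + B * D * (-(ρ12 * (1 - ρ12 ^ 2)))
      = -(ρ12 * ρ2i1 / ((1 - ρ2i1 ^ 2) * (1 - ρ12 ^ 2))) := by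
    rw [e1, e2]
    field_simp
    ring
  rw [← step]
  ring

end
end
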